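/- arXiv:math/0204242 — 2 statements merged into one kernel-verified Lean document; each statement's English description precedes it below -/
import Mathlib

section
/- Let m ≥ 3, let A = ⟨σ_1, σ_2 | ⟨σ_1 σ_2⟩^m = ⟨σ_2 σ_1⟩^m⟩ be the Artin group of type I_2(m) and let W be the dihedral Coxeter group of type I_2(m) (of order 2m). If m ≢ 0 (mod 4), then every epimorphism A → W is ordinary. If m ≡ 0 (mod 4), then there are exactly two equivalence classes of extraordinary epimorphisms A → W, represented by ν_m^1 and ν_m^2, where ν_m^1(σ_1) = s_1, ν_m^1(σ_2) = s_2 s_1, ν_m^2(σ_1) = s_1 s_2, ν_m^2(σ_2) = s_2; in particular, when m ≡ 0 (mod 4) these two assignments define surjective group homomorphisms A → W that are extraordinary and inequivalent, and every extraordinary epimorphism A → W is equivalent to one of them. -/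
open Function

/-- The alternating word `⟨i j⟩^m = i j i j ⋯` with `m` factors, in the free group. -/
def altWord {α : Type*} (i j : α) : ℕ → FreeGroup α
  | 0 => 1
  | m + 1 => FreeGroup.of i * altWord j i m

/-- The braid relations of an Artin group of type `M` (an entry `0` encodes `∞`). -/
def artinRels {n : ℕ} (M : Matrix (Fin n) (Fin n) ℕ) : Set (FreeGroup (Fin n)) :=
  {r | ∃ i j : Fin n, i ≠ j ∧ M i j ≠ 0 ∧
      r = altWord i j (M i j) * (altWord j i (M i j))⁻¹}

/-- The relations of the Coxeter group of type `M`. -/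
def coxRels {n : ℕ} (M : Matrix (Fin n) (Fin n) ℕ) : Set (FreeGroup (Fin n)) :=
  artinRels M ∪ {r | ∃ i : Fin n, r = FreeGroup.of i ^ 2}

/-- The Artin group of type `M`. -/
abbrev ArtinGroup {n : ℕ} (M : Matrix (Fin n) (Fin n) ℕ) : Type :=
  PresentedGroup (artinRels M)

/-- The Coxeter group of type `M`, as the quotient of the Artin group by `σᵢ² = 1`. -/
abbrev CoxGroup {n : ℕ} (M : Matrix (Fin n) (Fin n) ℕ) : Type :=
  PresentedGroup (coxRels M)

/-- The standard generators `σᵢ` of the Artin group. -/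
def σA {n : ℕ} (M : Matrix (Fin n) (Fin n) ℕ) (i : Fin n) : ArtinGroup M :=
  PresentedGroup.of i

/-- The standard generators `sᵢ` of the Coxeter group. -/
def sC {n : ℕ} (M : Matrix (Fin n) (Fin n) ℕ) (i : Fin n) : CoxGroup M :=
  PresentedGroup.of i

lemma lift_of_eq_mk {n : ℕ} (M : Matrix (Fin n) (Fin n) ℕ) (r : FreeGroup (Fin n)) :
    FreeGroup.lift (fun i => (PresentedGroup.of i : CoxGroup M)) r
      = PresentedGroup.mk (coxRels M) r := by
  have h : (FreeGroup.lift (fun i => (PresentedGroup.of i : CoxGroup M)))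
      = PresentedGroup.mk (coxRels M) :=
    FreeGroup.ext_hom _ _ (fun x => by simp [PresentedGroup.of])
  rw [h]

/-- The standard epimorphism `μ : A → W`. -/
def stdEpi {n : ℕ} (M : Matrix (Fin n) (Fin n) ℕ) : ArtinGroup M →* CoxGroup M :=
  PresentedGroup.toGroup (f := fun i => (PresentedGroup.of i : CoxGroup M)) (by
    intro r hr
    rw [lift_of_eq_mk]
    exact (QuotientGroup.eq_one_iff r).mpr
      (Subgroup.subset_normalClosure (Set.mem_union_left _ hr)))

@[simp] lemma stdEpi_of {n : ℕ} (M : Matrix (Fin n) (Fin n) ℕ) (i : Fin n) :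
    stdEpi M (σA M i) = sC M i :=
  PresentedGroup.toGroup.of _

/-- `φ : A → W` is ordinary if it is `α ∘ μ` for some automorphism `α` of `W`. -/
def Ordinary {n : ℕ} {M : Matrix (Fin n) (Fin n) ℕ}
    (φ : ArtinGroup M →* CoxGroup M) : Prop :=
  ∃ α : CoxGroup M ≃* CoxGroup M, φ = α.toMonoidHom.comp (stdEpi M)

/-- The Coxeter matrix of type `I₂(m)`. -/
def I2 (m : ℕ) : Matrix (Fin 2) (Fin 2) ℕ := fun i j => if i = j then 1 else m

/-! Sending `s₁, s₂` to the reflections `sr 0, sr 1` identifies `W` with the dihedral group `D_m`,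
so an epimorphism `A → W` is a generating pair `(a, b)` of `D_m` satisfying the braid relation of
length `m`. Two rotations never generate. Two reflections `sr i, sr j` generate iff `j - i` is a
unit, and such a pair is the image of `(sr 0, sr 1)` under an affine automorphism
`r k ↦ r (u k), sr k ↦ sr (u k + v)`: these are the ordinary epimorphisms. A reflection and a
rotation `r k` generate iff `k` is a unit, and then the braid relation holds iff `4 ∣ m`: for odd
`m` one side is a rotation and the other a reflection, and for `m ≡ 2 (mod 4)` it forces `2 k = 0`.
Such pairs are affine images of `(sr 0, r (-1))` or `(r 1, sr 1)`, the images of `ν_m^1` and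
`ν_m^2`. For `m ≥ 3` automorphisms of `D_m` map reflections to reflections, which separates the
three classes. -/

section Group

variable {G : Type*} [Group G]

def altProd (a b : G) : ℕ → G
  | 0 => 1
  | n + 1 => a * altProd b a n

lemma altProd_two_mul (a b : G) (q : ℕ) : altProd a b (2 * q) = (a * b) ^ q := by
  induction q with
  | zero => simp [altProd]
  | succ q ih => rw [Nat.mul_succ, altProd, altProd, ih, pow_succ', mul_assoc]

lemma altProd_two_mul_add_one (a b : G) (q : ℕ) :
    altProd a b (2 * q + 1) = (a * b) ^ q * a := by
  rw [mul_pow_mul, altProd, altProd_two_mul]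

lemma map_altProd {H F : Type*} [Group H] [FunLike F G H] [MonoidHomClass F G H] (f : F)
    (a b : G) (n : ℕ) : f (altProd a b n) = altProd (f a) (f b) n := by
  induction n generalizing a b with
  | zero => exact map_one f
  | succ n ih => rw [altProd, altProd, map_mul, ih]

lemma lift_altWord {α : Type*} (f : α → G) (i j : α) (n : ℕ) :
    FreeGroup.lift f (altWord i j n) = altProd (f i) (f j) n := by
  induction n generalizing i j with
  | zero => exact map_one _
  | succ n ih => rw [altWord, altProd, map_mul, ih, FreeGroup.lift_apply_of]

lemma altProd_mul_inv_altProd {a b : G} (ha : a⁻¹ = a) (hb : b⁻¹ = b) (n : ℕ) :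
    altProd a b n * (altProd b a n)⁻¹ = (a * b) ^ n := by
  induction n generalizing a b with
  | zero => simp [altProd]
  | succ n ih =>
    calc altProd a b (n + 1) * (altProd b a (n + 1))⁻¹
        = a * (altProd b a n * (altProd a b n)⁻¹) * b⁻¹ := by
          simp only [altProd, mul_inv_rev, mul_assoc]
      _ = (a * b) ^ (n + 1) := by rw [ih hb ha, hb, ← mul_pow_mul, pow_succ, mul_assoc]

lemma altProd_eq_altProd_iff {a b : G} (ha : a⁻¹ = a) (hb : b⁻¹ = b) (n : ℕ) :
    altProd a b n = altProd b a n ↔ (a * b) ^ n = 1 := by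
  rw [← altProd_mul_inv_altProd ha hb, mul_inv_eq_one]

variable {n : ℕ} {ρ s : G}

lemma zpow_eq_zpow_of_intCast_eq (hρ : ρ ^ n = 1) {k l : ℤ} (h : (k : ZMod n) = l) :
    ρ ^ k = ρ ^ l := by
  obtain ⟨c, hc⟩ := (ZMod.intCast_eq_intCast_iff_dvd_sub k l n).mp h
  rw [show l = k + n * c by omega, zpow_add, zpow_mul, zpow_natCast, hρ, one_zpow, mul_one]

lemma zpow_mul_eq_mul_zpow_neg (hs : s * s = 1) (hsρ : s * ρ * s = ρ⁻¹) (k : ℤ) :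
    ρ ^ k * s = s * ρ ^ (-k) := by
  have hs' : s⁻¹ = s := inv_eq_of_mul_eq_one_right hs
  have hconj : (s * ρ * s⁻¹) ^ k = s * ρ ^ k * s⁻¹ := conj_zpow
  rw [hs', hsρ, inv_zpow] at hconj
  rw [zpow_neg, hconj, ← mul_assoc, ← mul_assoc, hs, one_mul]

end Group

namespace DihedralGroup

variable {n : ℕ}

def IsReflection : DihedralGroup n → Prop
  | r _ => False
  | sr _ => True

lemma sr_pow_two_mul (i : ZMod n) (p : ℕ) : sr i ^ (2 * p) = 1 := by
  rw [pow_mul, sq, sr_mul_self, one_pow]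

lemma sr_pow_two_mul_add_one (i : ZMod n) (p : ℕ) : sr i ^ (2 * p + 1) = sr i := by
  rw [pow_succ, sr_pow_two_mul, one_mul]

lemma braid_sr_sr (i j : ZMod n) : altProd (sr i) (sr j) n = altProd (sr j) (sr i) n := by
  rw [altProd_eq_altProd_iff (inv_sr i) (inv_sr j), sr_mul_sr, r_pow, ZMod.natCast_self,
    mul_zero, r_zero]

lemma braid_sr_r_of_four_dvd {N : ℕ} (h : 4 ∣ N) (i k : ZMod n) :
    altProd (sr i) (r k) N = altProd (r k) (sr i) N := by
  obtain ⟨p, rfl⟩ := h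
  rw [show 4 * p = 2 * (2 * p) by ring, altProd_two_mul, altProd_two_mul, sr_mul_r, r_mul_sr,
    sr_pow_two_mul, sr_pow_two_mul]

lemma four_dvd_or_two_mul_eq_zero_of_braid_sr_r {N : ℕ} {i k : ZMod n}
    (h : altProd (sr i) (r k) N = altProd (r k) (sr i) N) : 4 ∣ N ∨ 2 * k = 0 := by
  obtain ⟨p, j, hj, rfl⟩ : ∃ p j, j < 4 ∧ N = 4 * p + j :=
    ⟨N / 4, N % 4, Nat.mod_lt _ (by norm_num), (Nat.div_add_mod N 4).symm⟩
  interval_cases j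
  · exact Or.inl (Dvd.intro p rfl)
  · rw [show 4 * p + 1 = 2 * (2 * p) + 1 by ring, altProd_two_mul_add_one,
      altProd_two_mul_add_one, sr_mul_r, r_mul_sr, sr_pow_two_mul, sr_pow_two_mul] at h
    simp at h
  · rw [show 4 * p + 2 = 2 * (2 * p + 1) by ring, altProd_two_mul, altProd_two_mul, sr_mul_r,
      r_mul_sr, sr_pow_two_mul_add_one, sr_pow_two_mul_add_one, sr.injEq] at h
    exact Or.inr (by linear_combination h)
  · rw [show 4 * p + 3 = 2 * (2 * p + 1) + 1 by ring, altProd_two_mul_add_one,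
      altProd_two_mul_add_one, sr_mul_r, r_mul_sr, sr_pow_two_mul_add_one,
      sr_pow_two_mul_add_one, sr_mul_sr, sr_mul_r] at h
    simp at h

lemma four_dvd_of_braid_sr_r (hn : 3 ≤ n) {i k : ZMod n} (hk : IsUnit k)
    (h : altProd (sr i) (r k) n = altProd (r k) (sr i) n) : 4 ∣ n := by
  refine (four_dvd_or_two_mul_eq_zero_of_braid_sr_r h).resolve_right fun h2 => ?_
  have h2 : ((2 : ℕ) : ZMod n) = 0 := by simpa [hk.mul_left_eq_zero] using h2
  have := Nat.le_of_dvd two_pos ((ZMod.natCast_eq_zero_iff 2 n).mp h2)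
  omega

section Lift

variable {G : Type*} [Group G] {ρ s : G}

/-- `i.cast` is an integer representative of `i`; `ρ ^ n = 1` makes the choice immaterial. -/
def lift (hρ : ρ ^ n = 1) (hs : s * s = 1) (hsρ : s * ρ * s = ρ⁻¹) : DihedralGroup n →* G where
  toFun
    | r i => ρ ^ (i.cast : ℤ)
    | sr i => s * ρ ^ (i.cast : ℤ)
  map_one' := by simp only [one_def, ZMod.cast_zero, zpow_zero]
  map_mul' := by
    have hcast {k l : ℤ} (h : (k : ZMod n) = l) : ρ ^ k = ρ ^ l :=
      zpow_eq_zpow_of_intCast_eq hρ h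
    rintro (a | a) (b | b) <;> simp only [r_mul_r, r_mul_sr, sr_mul_r, sr_mul_sr]
    · rw [← zpow_add]
      exact hcast (by push_cast [ZMod.intCast_zmod_cast]; ring)
    · rw [← mul_assoc, zpow_mul_eq_mul_zpow_neg hs hsρ, mul_assoc, ← zpow_add]
      exact congrArg (s * ·) (hcast (by push_cast [ZMod.intCast_zmod_cast]; ring))
    · rw [mul_assoc, ← zpow_add]
      exact congrArg (s * ·) (hcast (by push_cast [ZMod.intCast_zmod_cast]; ring))
    · rw [mul_assoc, ← mul_assoc (ρ ^ _), zpow_mul_eq_mul_zpow_neg hs hsρ, ← mul_assoc,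
        ← mul_assoc, hs, one_mul, ← zpow_add]
      exact hcast (by push_cast [ZMod.intCast_zmod_cast]; ring)

variable (hρ : ρ ^ n = 1) (hs : s * s = 1) (hsρ : s * ρ * s = ρ⁻¹)

lemma lift_r_intCast (k : ℤ) : lift hρ hs hsρ (r k) = ρ ^ k :=
  zpow_eq_zpow_of_intCast_eq hρ (ZMod.intCast_zmod_cast _)

lemma lift_sr_intCast (k : ℤ) : lift hρ hs hsρ (sr k) = s * ρ ^ k :=
  congrArg (s * ·) (zpow_eq_zpow_of_intCast_eq hρ (ZMod.intCast_zmod_cast _))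

end Lift

def affineEquiv (u : (ZMod n)ˣ) (v : ZMod n) : DihedralGroup n ≃* DihedralGroup n where
  toFun
    | r k => r ((u : ZMod n) * k)
    | sr k => sr ((u : ZMod n) * k + v)
  invFun
    | r k => r (((u⁻¹ : (ZMod n)ˣ) : ZMod n) * k)
    | sr k => sr (((u⁻¹ : (ZMod n)ˣ) : ZMod n) * (k - v))
  left_inv := by rintro (k | k) <;> simp
  right_inv := by rintro (k | k) <;> simp
  map_mul' := by
    rintro (a | a) (b | b) <;> simp only [r_mul_r, r_mul_sr, sr_mul_r, sr_mul_sr] <;>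
      congr 1 <;> ring

@[simp] lemma affineEquiv_r (u : (ZMod n)ˣ) (v k : ZMod n) :
    affineEquiv u v (r k) = r ((u : ZMod n) * k) := rfl

@[simp] lemma affineEquiv_sr (u : (ZMod n)ˣ) (v k : ZMod n) :
    affineEquiv u v (sr k) = sr ((u : ZMod n) * k + v) := rfl

def dihedralSubgroup (i d : ZMod n) : Subgroup (DihedralGroup n) where
  carrier := {x | ∃ c : ZMod n, x = r (c * d) ∨ x = sr (i + c * d)}
  one_mem' := ⟨0, Or.inl (by rw [zero_mul, r_zero])⟩
  mul_mem' := by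
    rintro _ _ ⟨a, rfl | rfl⟩ ⟨b, rfl | rfl⟩
    · exact ⟨a + b, Or.inl (by rw [r_mul_r]; ring_nf)⟩
    · exact ⟨b - a, Or.inr (by rw [r_mul_sr]; ring_nf)⟩
    · exact ⟨a + b, Or.inr (by rw [sr_mul_r]; ring_nf)⟩
    · exact ⟨b - a, Or.inl (by rw [sr_mul_sr]; ring_nf)⟩
  inv_mem' := by
    rintro _ ⟨a, rfl | rfl⟩
    · exact ⟨-a, Or.inl (by rw [inv_r]; ring_nf)⟩
    · exact ⟨a, Or.inr (inv_sr _)⟩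

lemma isUnit_of_dihedralSubgroup_eq_top {i d : ZMod n} (h : dihedralSubgroup i d = ⊤) :
    IsUnit d := by
  obtain ⟨c, hc | hc⟩ : r 1 ∈ dihedralSubgroup i d := h ▸ Subgroup.mem_top _
  · exact IsUnit.of_mul_eq_one_right c (r.inj hc).symm
  · cases hc

lemma isUnit_of_closure_sr_r_eq_top {i k : ZMod n}
    (h : Subgroup.closure {sr i, r k} = ⊤) : IsUnit k := by
  refine isUnit_of_dihedralSubgroup_eq_top (i := i) (top_le_iff.mp (h ▸ ?_))
  rw [Subgroup.closure_le, Set.insert_subset_iff, Set.singleton_subset_iff]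
  exact ⟨⟨0, Or.inr (by simp)⟩, ⟨1, Or.inl (by simp)⟩⟩

lemma isUnit_sub_of_closure_sr_sr_eq_top {i j : ZMod n}
    (h : Subgroup.closure {sr i, sr j} = ⊤) : IsUnit (j - i) := by
  refine isUnit_of_dihedralSubgroup_eq_top (i := i) (top_le_iff.mp (h ▸ ?_))
  rw [Subgroup.closure_le, Set.insert_subset_iff, Set.singleton_subset_iff]
  exact ⟨⟨0, Or.inr (by simp)⟩, ⟨1, Or.inr (by simp)⟩⟩

lemma closure_sr_r_eq_top {k : ZMod n} (hk : IsUnit k) (i : ZMod n) :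
    Subgroup.closure {sr i, r k} = ⊤ := by
  have hr (t : ZMod n) : r t ∈ Subgroup.closure {sr i, r k} := by
    rw [show r t = r k ^ ((hk.unit⁻¹ * t : ZMod n).cast : ℤ) by
      rw [r_zpow, ZMod.intCast_zmod_cast, ← mul_assoc, IsUnit.mul_val_inv, one_mul]]
    exact zpow_mem (Subgroup.subset_closure (by simp)) _
  refine eq_top_iff.mpr fun x _ => ?_
  rcases x with t | t
  · exact hr t
  · rw [show sr t = sr i * r (t - i) by rw [sr_mul_r, add_sub_cancel]]
    exact mul_mem (Subgroup.subset_closure (by simp)) (hr _)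

lemma closure_r_r_ne_top (i k : ZMod n) : Subgroup.closure {r i, r k} ≠ ⊤ := by
  intro h
  have hle : Subgroup.closure {r i, r k} ≤ Subgroup.zpowers (r 1) := by
    rw [Subgroup.closure_le, Set.insert_subset_iff, Set.singleton_subset_iff]
    exact ⟨⟨(i.cast : ℤ), by simp⟩, ⟨(k.cast : ℤ), by simp⟩⟩
  obtain ⟨c, hc⟩ := hle (h ▸ Subgroup.mem_top (sr 0))
  simp at hc

lemma isReflection_map (hn : 3 ≤ n) (α : DihedralGroup n ≃* DihedralGroup n)
    (x : DihedralGroup n) : IsReflection (α x) ↔ IsReflection x := by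
  suffices h : ∀ (α : DihedralGroup n ≃* DihedralGroup n) x,
      IsReflection x → IsReflection (α x) from
    ⟨fun hx => by simpa using h α.symm _ hx, h α x⟩
  rintro α (t | t) ⟨⟩
  -- `α (r 1)` has order `n ≥ 3`, so it is a rotation; were `α (sr t)` a rotation too, `α` would
  -- map the generating pair `sr t, r 1` into the rotations.
  obtain ⟨u, hu⟩ : ∃ u, α (r 1) = r u := by
    rcases h1 : α (r 1) with u | w
    · exact ⟨u, rfl⟩
    · have := MulEquiv.orderOf_eq α (r 1)
      rw [h1, orderOf_sr, orderOf_r_one] at this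
      omega
  rcases hst : α (sr t) with w | w
  · apply closure_r_r_ne_top w u
    rw [← hst, ← hu, ← Set.image_pair, ← MulEquiv.coe_toMonoidHom, ← MonoidHom.map_closure,
      closure_sr_r_eq_top isUnit_one]
    exact Subgroup.map_top_of_surjective _ α.surjective
  · trivial

theorem exists_mulEquiv_of_braid_of_closure_eq_top (hn : 3 ≤ n) {a b : DihedralGroup n}
    (hab : altProd a b n = altProd b a n) (hgen : Subgroup.closure {a, b} = ⊤) :
    ∃ α : DihedralGroup n ≃* DihedralGroup n,
      (α (sr 0) = a ∧ α (sr 1) = b) ∨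
        4 ∣ n ∧ ((α (sr 0) = a ∧ α (r (-1)) = b) ∨ (α (r 1) = a ∧ α (sr 1) = b)) := by
  rcases a with k | i <;> rcases b with l | j
  · exact absurd hgen (closure_r_r_ne_top k l)
  · rw [Set.pair_comm] at hgen
    have hk := isUnit_of_closure_sr_r_eq_top hgen
    refine ⟨affineEquiv hk.unit (j - k), Or.inr ⟨four_dvd_of_braid_sr_r hn hk hab.symm, ?_⟩⟩
    exact Or.inr ⟨by simp, by simp⟩
  · have hl := isUnit_of_closure_sr_r_eq_top hgen
    refine ⟨affineEquiv (-hl.unit) i, Or.inr ⟨four_dvd_of_braid_sr_r hn hl hab, ?_⟩⟩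
    exact Or.inl ⟨by simp, by simp⟩
  · exact ⟨affineEquiv (isUnit_sub_of_closure_sr_sr_eq_top hgen).unit i, Or.inl ⟨by simp, by simp⟩⟩

end DihedralGroup

open DihedralGroup

section I2

variable {m : ℕ} {G : Type*} [Group G]

lemma lift_eq_one_of_mem_artinRels_I2 {a b : G} (h : altProd a b m = altProd b a m) :
    ∀ w ∈ artinRels (I2 m), FreeGroup.lift ![a, b] w = 1 := by
  rintro w ⟨i, j, hij, -, rfl⟩
  fin_cases i <;> fin_cases j <;> simp_all [I2, lift_altWord]

def artinLift {a b : G} (h : altProd a b m = altProd b a m) : ArtinGroup (I2 m) →* G :=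
  PresentedGroup.toGroup (lift_eq_one_of_mem_artinRels_I2 h)

@[simp] lemma artinLift_σA_zero {a b : G} (h : altProd a b m = altProd b a m) :
    artinLift h (σA (I2 m) 0) = a :=
  PresentedGroup.toGroup.of _

@[simp] lemma artinLift_σA_one {a b : G} (h : altProd a b m = altProd b a m) :
    artinLift h (σA (I2 m) 1) = b :=
  PresentedGroup.toGroup.of _

lemma braid_of_artinHom (φ : ArtinGroup (I2 m) →* G) :
    altProd (φ (σA (I2 m) 0)) (φ (σA (I2 m) 1)) m =
      altProd (φ (σA (I2 m) 1)) (φ (σA (I2 m) 0)) m := by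
  rcases eq_or_ne m 0 with rfl | hm
  · rfl
  have hrel : altWord 0 1 m * (altWord 1 0 m)⁻¹ ∈ artinRels (I2 m) :=
    ⟨0, 1, by decide, by simpa [I2] using hm, by simp [I2]⟩
  have hφ (w : FreeGroup (Fin 2)) :
      φ (PresentedGroup.mk _ w) = FreeGroup.lift (fun i => φ (σA (I2 m) i)) w :=
    FreeGroup.lift_unique (φ.comp (PresentedGroup.mk _)) (fun _ => rfl)
  have := congrArg φ (PresentedGroup.one_of_mem hrel)
  rwa [map_one, hφ, map_mul, map_inv, lift_altWord, lift_altWord, mul_inv_eq_one] at this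

lemma artinHom_ext {φ ψ : ArtinGroup (I2 m) →* G} (h0 : φ (σA (I2 m) 0) = ψ (σA (I2 m) 0))
    (h1 : φ (σA (I2 m) 1) = ψ (σA (I2 m) 1)) : φ = ψ :=
  PresentedGroup.ext fun i => by fin_cases i <;> assumption

lemma surjective_artinHom_iff (φ : ArtinGroup (I2 m) →* G) :
    Surjective φ ↔ Subgroup.closure {φ (σA (I2 m) 0), φ (σA (I2 m) 1)} = ⊤ := by
  rw [← MonoidHom.range_eq_top, MonoidHom.range_eq_map, ← PresentedGroup.closure_range_of,
    MonoidHom.map_closure, ← Set.range_comp]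
  congr! 2
  ext x
  simp [Fin.exists_fin_two, eq_comm, σA]

end I2

lemma sC_mul_self {n : ℕ} (M : Matrix (Fin n) (Fin n) ℕ) (i : Fin n) : sC M i * sC M i = 1 := by
  rw [← sq]
  exact PresentedGroup.one_of_mem (Set.mem_union_right _ ⟨i, rfl⟩)

lemma sC_inv {n : ℕ} (M : Matrix (Fin n) (Fin n) ℕ) (i : Fin n) : (sC M i)⁻¹ = sC M i :=
  inv_eq_of_mul_eq_one_right (sC_mul_self M i)

section CoxeterDihedral

variable (m : ℕ)

def coxToDihedral : CoxGroup (I2 m) →* DihedralGroup m :=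
  PresentedGroup.toGroup (f := ![sr 0, sr 1]) <| by
    rintro w (hw | ⟨i, rfl⟩)
    · exact lift_eq_one_of_mem_artinRels_I2 (braid_sr_sr 0 1) w hw
    · fin_cases i <;> simp [sq]

@[simp] lemma coxToDihedral_sC_zero : coxToDihedral m (sC (I2 m) 0) = sr 0 := by
  simp [coxToDihedral, sC]

@[simp] lemma coxToDihedral_sC_one : coxToDihedral m (sC (I2 m) 1) = sr 1 := by
  simp [coxToDihedral, sC]

lemma pow_sC_mul_sC_eq_one : (sC (I2 m) 0 * sC (I2 m) 1) ^ m = 1 := by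
  rw [← altProd_eq_altProd_iff (sC_inv _ 0) (sC_inv _ 1)]
  simpa using braid_of_artinHom (stdEpi (I2 m))

def dihedralToCox : DihedralGroup m →* CoxGroup (I2 m) :=
  DihedralGroup.lift (pow_sC_mul_sC_eq_one m) (sC_mul_self _ 0) <| by
    rw [mul_inv_rev, sC_inv, sC_inv, ← mul_assoc, sC_mul_self, one_mul]

lemma dihedralToCox_r_intCast (k : ℤ) :
    dihedralToCox m (r k) = (sC (I2 m) 0 * sC (I2 m) 1) ^ k :=
  lift_r_intCast _ _ _ k

lemma dihedralToCox_sr_intCast (k : ℤ) :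
    dihedralToCox m (sr k) = sC (I2 m) 0 * (sC (I2 m) 0 * sC (I2 m) 1) ^ k :=
  lift_sr_intCast _ _ _ k

def coxEquivDihedral : CoxGroup (I2 m) ≃* DihedralGroup m :=
  MonoidHom.toMulEquiv (coxToDihedral m) (dihedralToCox m)
    (PresentedGroup.ext fun i => by
      fin_cases i
      · show dihedralToCox m (coxToDihedral m (sC (I2 m) 0)) = sC (I2 m) 0
        simpa using dihedralToCox_sr_intCast m 0
      · show dihedralToCox m (coxToDihedral m (sC (I2 m) 1)) = sC (I2 m) 1
        simpa [← mul_assoc, sC_mul_self] using dihedralToCox_sr_intCast m 1)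
    (by
      ext x
      rcases x with i | i <;> obtain ⟨k, rfl⟩ := ZMod.intCast_surjective i
      · simp [dihedralToCox_r_intCast, sr_mul_sr]
      · simp [dihedralToCox_sr_intCast, sr_mul_sr, sr_mul_r])

@[simp] lemma coxEquivDihedral_sC_zero : coxEquivDihedral m (sC (I2 m) 0) = sr 0 :=
  coxToDihedral_sC_zero m

@[simp] lemma coxEquivDihedral_sC_one : coxEquivDihedral m (sC (I2 m) 1) = sr 1 :=
  coxToDihedral_sC_one m

end CoxeterDihedral

section Epimorphisms

variable {m : ℕ}

lemma surjective_iff_closure_coxEquivDihedral (φ : ArtinGroup (I2 m) →* CoxGroup (I2 m)) :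
    Surjective φ ↔ Subgroup.closure
      {coxEquivDihedral m (φ (σA (I2 m) 0)), coxEquivDihedral m (φ (σA (I2 m) 1))} = ⊤ := by
  rw [← EquivLike.comp_surjective φ (coxEquivDihedral m)]
  exact surjective_artinHom_iff ((coxEquivDihedral m).toMonoidHom.comp φ)

lemma braid_coxEquivDihedral (φ : ArtinGroup (I2 m) →* CoxGroup (I2 m)) :
    altProd (coxEquivDihedral m (φ (σA (I2 m) 0))) (coxEquivDihedral m (φ (σA (I2 m) 1))) m =
      altProd (coxEquivDihedral m (φ (σA (I2 m) 1))) (coxEquivDihedral m (φ (σA (I2 m) 0))) m :=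
  braid_of_artinHom ((coxEquivDihedral m).toMonoidHom.comp φ)

lemma exists_mulEquiv_comp_eq (φ ψ : ArtinGroup (I2 m) →* CoxGroup (I2 m))
    (α : DihedralGroup m ≃* DihedralGroup m)
    (h0 : coxEquivDihedral m (φ (σA (I2 m) 0)) = α (coxEquivDihedral m (ψ (σA (I2 m) 0))))
    (h1 : coxEquivDihedral m (φ (σA (I2 m) 1)) = α (coxEquivDihedral m (ψ (σA (I2 m) 1)))) :
    ∃ β : CoxGroup (I2 m) ≃* CoxGroup (I2 m), φ = β.toMonoidHom.comp ψ :=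
  ⟨((coxEquivDihedral m).trans α).trans (coxEquivDihedral m).symm,
    artinHom_ext (by simp [← h0]) (by simp [← h1])⟩

lemma not_exists_mulEquiv_comp_eq (hm : 3 ≤ m) {φ ψ : ArtinGroup (I2 m) →* CoxGroup (I2 m)}
    (i : Fin 2) (hφ : ¬ IsReflection (coxEquivDihedral m (φ (σA (I2 m) i))))
    (hψ : IsReflection (coxEquivDihedral m (ψ (σA (I2 m) i)))) :
    ¬ ∃ β : CoxGroup (I2 m) ≃* CoxGroup (I2 m), φ = β.toMonoidHom.comp ψ := by
  rintro ⟨β, rfl⟩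
  refine hφ ?_
  simpa using (isReflection_map hm (((coxEquivDihedral m).symm.trans β).trans
    (coxEquivDihedral m)) _).mpr hψ

def nu₁ (h : 4 ∣ m) : ArtinGroup (I2 m) →* CoxGroup (I2 m) :=
  artinLift (a := sC (I2 m) 0) (b := sC (I2 m) 1 * sC (I2 m) 0) <| by
    apply (coxEquivDihedral m).injective
    simpa [map_altProd, sr_mul_sr] using braid_sr_r_of_four_dvd h 0 (-1)

def nu₂ (h : 4 ∣ m) : ArtinGroup (I2 m) →* CoxGroup (I2 m) :=
  artinLift (a := sC (I2 m) 0 * sC (I2 m) 1) (b := sC (I2 m) 1) <| by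
    apply (coxEquivDihedral m).injective
    simpa [map_altProd, sr_mul_sr] using (braid_sr_r_of_four_dvd h 1 1).symm

variable (h : 4 ∣ m)

@[simp] lemma nu₁_σA_zero : nu₁ h (σA (I2 m) 0) = sC (I2 m) 0 := artinLift_σA_zero _
@[simp] lemma nu₁_σA_one : nu₁ h (σA (I2 m) 1) = sC (I2 m) 1 * sC (I2 m) 0 := artinLift_σA_one _
@[simp] lemma nu₂_σA_zero : nu₂ h (σA (I2 m) 0) = sC (I2 m) 0 * sC (I2 m) 1 := artinLift_σA_zero _
@[simp] lemma nu₂_σA_one : nu₂ h (σA (I2 m) 1) = sC (I2 m) 1 := artinLift_σA_one _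

lemma surjective_nu₁ : Surjective (nu₁ h) :=
  (surjective_iff_closure_coxEquivDihedral _).mpr <| by
    simpa [sr_mul_sr] using closure_sr_r_eq_top isUnit_one.neg 0

lemma surjective_nu₂ : Surjective (nu₂ h) :=
  (surjective_iff_closure_coxEquivDihedral _).mpr <| by
    simpa [sr_mul_sr, Set.pair_comm] using closure_sr_r_eq_top isUnit_one 1

theorem ordinary_or_exists_comp_nu (hm : 3 ≤ m) {φ : ArtinGroup (I2 m) →* CoxGroup (I2 m)}
    (hφ : Surjective φ) :
    Ordinary φ ∨ ∃ h : 4 ∣ m,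
      (∃ β : CoxGroup (I2 m) ≃* CoxGroup (I2 m), φ = β.toMonoidHom.comp (nu₁ h)) ∨
      (∃ β : CoxGroup (I2 m) ≃* CoxGroup (I2 m), φ = β.toMonoidHom.comp (nu₂ h)) := by
  obtain ⟨α, ⟨h0, h1⟩ | ⟨h, ⟨h0, h1⟩ | ⟨h0, h1⟩⟩⟩ :=
    exists_mulEquiv_of_braid_of_closure_eq_top hm (braid_coxEquivDihedral φ)
      ((surjective_iff_closure_coxEquivDihedral φ).mp hφ)
  · exact Or.inl (exists_mulEquiv_comp_eq _ _ α (by simp [h0]) (by simp [h1]))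
  · refine Or.inr ⟨h, Or.inl ?_⟩
    exact exists_mulEquiv_comp_eq _ _ α (by simp [h0]) (by simp [h1, sr_mul_sr])
  · refine Or.inr ⟨h, Or.inr ?_⟩
    exact exists_mulEquiv_comp_eq _ _ α (by simp [h0, sr_mul_sr]) (by simp [h1])

end Epimorphisms

/-- Classification of the epimorphisms `A → W` for type `I₂(m)`, `m ≥ 3`:
all are ordinary when `m ≢ 0 (mod 4)`; when `m ≡ 0 (mod 4)` there are exactly two
equivalence classes of extraordinary ones, represented by `ν_m^1` and `ν_m^2`. -/
theorem stmt_3 (m : ℕ) (hm : 3 ≤ m) :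
    (m % 4 ≠ 0 →
      ∀ φ : ArtinGroup (I2 m) →* CoxGroup (I2 m), Function.Surjective φ → Ordinary φ) ∧
    (m % 4 = 0 →
      ∃ ν₁ ν₂ : ArtinGroup (I2 m) →* CoxGroup (I2 m),
        ν₁ (σA (I2 m) 0) = sC (I2 m) 0 ∧
        ν₁ (σA (I2 m) 1) = sC (I2 m) 1 * sC (I2 m) 0 ∧
        ν₂ (σA (I2 m) 0) = sC (I2 m) 0 * sC (I2 m) 1 ∧
        ν₂ (σA (I2 m) 1) = sC (I2 m) 1 ∧
        Function.Surjective ν₁ ∧ Function.Surjective ν₂ ∧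
        ¬ Ordinary ν₁ ∧ ¬ Ordinary ν₂ ∧
        ¬ (∃ α : CoxGroup (I2 m) ≃* CoxGroup (I2 m), ν₂ = α.toMonoidHom.comp ν₁) ∧
        (∀ φ : ArtinGroup (I2 m) →* CoxGroup (I2 m),
          Function.Surjective φ → ¬ Ordinary φ →
          (∃ α : CoxGroup (I2 m) ≃* CoxGroup (I2 m), φ = α.toMonoidHom.comp ν₁) ∨
          (∃ α : CoxGroup (I2 m) ≃* CoxGroup (I2 m), φ = α.toMonoidHom.comp ν₂))) := by
  refine ⟨fun h4 φ hφ => ?_, fun h4 => ?_⟩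
  · rcases ordinary_or_exists_comp_nu hm hφ with hord | ⟨h4', -⟩
    exacts [hord, absurd (Nat.mod_eq_zero_of_dvd h4') h4]
  have h4 : 4 ∣ m := Nat.dvd_of_mod_eq_zero h4
  refine ⟨nu₁ h4, nu₂ h4, nu₁_σA_zero h4, nu₁_σA_one h4, nu₂_σA_zero h4, nu₂_σA_one h4,
    surjective_nu₁ h4, surjective_nu₂ h4,
    not_exists_mulEquiv_comp_eq hm 1 (by simp [IsReflection, sr_mul_sr]) (by simp [IsReflection]),
    not_exists_mulEquiv_comp_eq hm 0 (by simp [IsReflection, sr_mul_sr]) (by simp [IsReflection]),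
    not_exists_mulEquiv_comp_eq hm 0 (by simp [IsReflection, sr_mul_sr]) (by simp [IsReflection]),
    fun φ hφ hφo => ?_⟩
  rcases ordinary_or_exists_comp_nu hm hφ with hord | ⟨_, hnu⟩
  exacts [absurd hord hφo, hnu]
end

section
/- Let n ≥ 3 and let A be the Artin group of type B_n with Coxeter group W and standard epimorphism μ: A → W. Then there is no group homomorphism Φ: A → A with μ ∘ Φ = ν_n^1, and, when n is odd, there is no group homomorphism Φ: A → A with μ ∘ Φ = ν_n^2. -/
open Function

/-- The Coxeter matrix of type `Bₙ` (0-indexed: `m₀₁ = 4`, `m_{i,i+1} = 3` for `i ≥ 1`,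
all other off-diagonal entries `2`). -/
def BMat (n : ℕ) : Matrix (Fin n) (Fin n) ℕ := fun i j =>
  if i = j then 1
  else if ((i : ℕ) + 1 = j ∧ (i : ℕ) = 0) ∨ ((j : ℕ) + 1 = i ∧ (j : ℕ) = 0) then 4
  else if (i : ℕ) + 1 = j ∨ (j : ℕ) + 1 = i then 3
  else 2

/-- The generator `s_k` of the Coxeter group of type `Bₙ`, for a natural number index
(`1` if `k` is out of range). -/
def sgB (n : ℕ) (k : ℕ) : CoxGroup (BMat n) :=
  if h : k < n then sC (BMat n) ⟨k, h⟩ else 1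

/-- The element `c_k = s_k ⋯ s_1 s_0 s_1 ⋯ s_k` of the Coxeter group of type `Bₙ`. -/
def cB (n : ℕ) : ℕ → CoxGroup (BMat n)
  | 0 => sgB n 0
  | k + 1 => sgB n (k + 1) * cB n k * sgB n (k + 1)

/-- The longest element `δ = (s_0 s_1 ⋯ s_{n-1})ⁿ` of the Coxeter group of type `Bₙ`. -/
def deltaB (n : ℕ) : CoxGroup (BMat n) := (((List.range n).map (sgB n)).prod) ^ n

/-- The generator values of the extraordinary epimorphism `ν_n^1` of type `Bₙ`. -/
def nu1B (n : ℕ) : Fin n → CoxGroup (BMat n) := fun i =>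
  if (i : ℕ) = 0 then cB n 0 else cB n ((i : ℕ) - 1) * sgB n i

/-- The generator values of the extraordinary epimorphism `ν_n^2` of type `Bₙ` (`n` odd). -/
def nu2B (n : ℕ) : Fin n → CoxGroup (BMat n) := fun i =>
  if (i : ℕ) = 0 then deltaB n else cB n ((i : ℕ) - 1) * sgB n i

/-
Let the Coxeter group of type `B_∞` act on `V = ℤ^ℕ` by signed permutations, with simple roots
`α₀ = e₀` and `α_{a+1} = e_{a+1} - e_a`. In the semidirect product `H = (V → ℤ/2) ⋊ Aut V` the
elements `(δ_{α_a}, s_a)` satisfy the braid relations of type `B`: the left component of a reduced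
product of them is the sum of `δ` over the inversion set of the corresponding element of `W`.
This gives `ρ : A → H` with `ρ(σ_a²) = (δ_{α_a} + δ_{-α_a}, 1)`, so `ρ` maps `ker μ` into the normal
subgroup of pairs `(u, 1)` with `u` even. Both `ν_n^1` and `ν_n^2` send `σ₁, σ₂` (indexed from 0,
as in `BMat`) to `s₀s₁` and `s₁s₀s₁s₂`, so `ρ ∘ Φ` would send them to two explicit elements of `H`,
up to even corrections. Those corrections cancel in `±`-pairs when the left component of the braid
relation between the two images is evaluated at four suitable points, leaving `1 = 0` in `ℤ/2`.
-/

namespace ArtinB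

open Multiplicative

abbrev V : Type := ℕ → ℤ

def reflFun : ℕ → V → V
  | 0, v => Function.update v 0 (-v 0)
  | a + 1, v => v ∘ Equiv.swap a (a + 1)

lemma reflFun_zero_apply (v : V) (k : ℕ) : reflFun 0 v k = if k = 0 then -v 0 else v k := by
  simp only [reflFun, Function.update_apply]

lemma reflFun_succ_apply (a : ℕ) (v : V) (k : ℕ) :
    reflFun (a + 1) v k = if k = a then v (a + 1) else if k = a + 1 then v a else v k := by
  simp only [reflFun, Function.comp_apply, Equiv.swap_apply_def]
  split_ifs <;> rfl

lemma reflFun_involutive (a : ℕ) : Function.Involutive (reflFun a) := by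
  intro v
  funext k
  cases a <;> simp only [reflFun_zero_apply, reflFun_succ_apply] <;> split_ifs <;>
    first | rfl | simp_all

def refl (a : ℕ) : V ≃ₗ[ℤ] V where
  toFun := reflFun a
  invFun := reflFun a
  map_add' v w := by
    funext k
    cases a <;> simp only [reflFun_zero_apply, reflFun_succ_apply, Pi.add_apply] <;>
      split_ifs <;> ring
  map_smul' c v := by
    funext k
    cases a <;> simp only [reflFun_zero_apply, reflFun_succ_apply, Pi.smul_apply,
      RingHom.id_apply] <;> split_ifs <;> simp
  left_inv := reflFun_involutive a
  right_inv := reflFun_involutive a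

lemma refl_apply (a : ℕ) (v : V) : refl a v = reflFun a v := rfl

lemma refl_symm (a : ℕ) : (refl a).symm = refl a := rfl

lemma refl_mul_self (a : ℕ) : refl a * refl a = 1 :=
  LinearEquiv.ext (reflFun_involutive a)

lemma refl_mul_comm {a b : ℕ} (h : a + 2 ≤ b) : refl a * refl b = refl b * refl a := by
  obtain ⟨b, rfl⟩ : ∃ c, b = c + 1 := ⟨b - 1, by omega⟩
  ext v k
  cases a <;> simp only [LinearEquiv.mul_apply, refl_apply, reflFun_zero_apply,
    reflFun_succ_apply] <;> split_ifs <;> first | rfl | omega | simp_all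

lemma refl_braid_succ (a : ℕ) :
    refl (a + 1) * (refl (a + 2) * refl (a + 1))
      = refl (a + 2) * (refl (a + 1) * refl (a + 2)) := by
  ext v k
  simp only [LinearEquiv.mul_apply, refl_apply, reflFun_succ_apply]
  split_ifs <;> first | rfl | omega

lemma refl_braid_zero :
    refl 0 * (refl 1 * (refl 0 * refl 1)) = refl 1 * (refl 0 * (refl 1 * refl 0)) := by
  ext v k
  simp only [LinearEquiv.mul_apply, refl_apply, reflFun_zero_apply, reflFun_succ_apply]
  split_ifs <;> first | rfl | omega | simp_all

def root : ℕ → V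
  | 0 => Pi.single 0 1
  | a + 1 => Pi.single (a + 1) 1 - Pi.single a 1

lemma root_zero_apply (k : ℕ) : root 0 k = if k = 0 then 1 else 0 := Pi.single_apply _ _ _

lemma root_succ_apply (a k : ℕ) :
    root (a + 1) k = (if k = a + 1 then 1 else 0) - if k = a then 1 else 0 := by
  simp only [root, Pi.sub_apply, Pi.single_apply]

lemma refl_root_self (a : ℕ) : refl a (root a) = -root a := by
  funext k
  cases a <;> simp only [refl_apply, reflFun_zero_apply, reflFun_succ_apply, root_zero_apply,
    root_succ_apply, Pi.neg_apply] <;> split_ifs <;> omega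

lemma refl_root_eq_self {a b : ℕ} (h : a + 2 ≤ b ∨ b + 2 ≤ a) : refl a (root b) = root b := by
  funext k
  cases a <;> cases b <;> simp only [refl_apply, reflFun_zero_apply, reflFun_succ_apply,
    root_zero_apply, root_succ_apply] <;> split_ifs <;> first | omega | simp_all

lemma refl_root_succ (a : ℕ) : refl (a + 1) (root (a + 2)) = root (a + 1) + root (a + 2) := by
  funext k
  simp only [refl_apply, reflFun_succ_apply, root_succ_apply, Pi.add_apply]
  split_ifs <;> omega

lemma refl_succ_root (a : ℕ) : refl (a + 1) (root a) = root a + root (a + 1) := by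
  funext k
  cases a <;> simp only [refl_apply, reflFun_succ_apply, root_zero_apply, root_succ_apply,
    Pi.add_apply] <;> split_ifs <;> first | omega | simp_all

lemma refl_zero_root_one : refl 0 (root 1) = 2 • root 0 + root 1 := by
  funext k
  simp only [refl_apply, reflFun_zero_apply, root_zero_apply, root_succ_apply, Pi.add_apply,
    Pi.smul_apply]
  split_ifs <;> first | omega | simp_all

abbrev F : Type := V → ZMod 2

def act : (V ≃ₗ[ℤ] V) →* MulAut (Multiplicative F) where
  toFun g := AddEquiv.toMultiplicative
    { toFun := fun f ↦ f ∘ g.symm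
      invFun := fun f ↦ f ∘ g
      left_inv := fun f ↦ by funext v; simp
      right_inv := fun f ↦ by funext v; simp
      map_add' := fun _ _ ↦ rfl }
  map_one' := rfl
  map_mul' _ _ := rfl

abbrev H : Type := Multiplicative F ⋊[act] (V ≃ₗ[ℤ] V)

def mkH (f : F) (g : V ≃ₗ[ℤ] V) : H := ⟨ofAdd f, g⟩

lemma eq_mkH (x : H) : x = mkH (toAdd x.left) x.right := rfl

lemma mkH_mul (f f' : F) (g g' : V ≃ₗ[ℤ] V) :
    mkH f g * mkH f' g' = mkH (f + f' ∘ g.symm) (g * g') := rfl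

lemma mkH_one_mul (u f : F) (g : V ≃ₗ[ℤ] V) : mkH u 1 * mkH f g = mkH (u + f) g := rfl

lemma mkH_inv (f : F) (g : V ≃ₗ[ℤ] V) : (mkH f g)⁻¹ = mkH (-f ∘ g) g⁻¹ := rfl

open scoped Classical

lemma single_comp_symm (g : V ≃ₗ[ℤ] V) (x : V) :
    (Pi.single x 1 : F) ∘ g.symm = Pi.single (g x) 1 := by
  funext v
  simp only [Function.comp_apply, Pi.single_apply, LinearEquiv.symm_apply_eq]

noncomputable def gen (a : ℕ) : H := mkH (Pi.single (root a) 1) (refl a)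

lemma gen_mul_comm {a b : ℕ} (h : a + 2 ≤ b) : gen a * gen b = gen b * gen a := by
  simp only [gen, mkH_mul, single_comp_symm, refl_root_eq_self (Or.inl h),
    refl_root_eq_self (Or.inr h), refl_mul_comm h, add_comm]

lemma gen_braid_succ (a : ℕ) :
    gen (a + 1) * (gen (a + 2) * gen (a + 1)) = gen (a + 2) * (gen (a + 1) * gen (a + 2)) := by
  simp only [gen, mkH_mul, Pi.add_comp, single_comp_symm, refl_succ_root, refl_root_succ,
    map_add, refl_root_self, refl_braid_succ, Nat.add_assoc, Nat.reduceAdd]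
  congr 1
  abel_nf

lemma gen_braid_zero :
    gen 0 * (gen 1 * (gen 0 * gen 1)) = gen 1 * (gen 0 * (gen 1 * gen 0)) := by
  simp only [gen, mkH_mul, Pi.add_comp, single_comp_symm, refl_succ_root, refl_zero_root_one,
    map_add, map_nsmul, map_neg, zero_add, refl_root_self, refl_braid_zero]
  congr 1
  abel_nf

lemma lift_altWord_succ {α G : Type*} [Group G] (f : α → G) (i j : α) (m : ℕ) :
    FreeGroup.lift f (altWord i j (m + 1)) = f i * FreeGroup.lift f (altWord j i m) := by
  simp [altWord]

lemma lift_altWord_zero {α G : Type*} [Group G] (f : α → G) (i j : α) :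
    FreeGroup.lift f (altWord i j 0) = 1 := by
  simp [altWord]

lemma BMat_symm (n : ℕ) (i j : Fin n) : BMat n i j = BMat n j i := by
  unfold BMat
  split_ifs <;> simp_all <;> omega

lemma lift_gen_altWord_BMat {n : ℕ} (i j : Fin n) (hij : i ≠ j) :
    FreeGroup.lift (fun k : Fin n ↦ gen k) (altWord i j (BMat n i j))
      = FreeGroup.lift (fun k : Fin n ↦ gen k) (altWord j i (BMat n i j)) := by
  wlog hlt : (i : ℕ) < j generalizing i j
  · rw [BMat_symm]
    exact (this j i hij.symm (by omega)).symm
  obtain ⟨i, hi⟩ := i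
  obtain ⟨j, hj⟩ := j
  simp only at hlt
  by_cases hfar : i + 2 ≤ j
  · have hM : BMat n ⟨i, hi⟩ ⟨j, hj⟩ = 2 := by
      simp only [BMat, Fin.mk.injEq]
      split_ifs <;> omega
    simp only [hM, lift_altWord_succ, lift_altWord_zero, mul_one]
    exact gen_mul_comm hfar
  obtain rfl : j = i + 1 := by omega
  rcases i with _ | a
  · have hM : BMat n ⟨0, hi⟩ ⟨1, hj⟩ = 4 := by simp [BMat]
    simp only [hM, lift_altWord_succ, lift_altWord_zero, mul_one]
    exact gen_braid_zero
  · have hM : BMat n ⟨a + 1, hi⟩ ⟨a + 2, hj⟩ = 3 := by simp [BMat]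
    simp only [hM, lift_altWord_succ, lift_altWord_zero, mul_one]
    exact gen_braid_succ a

lemma lift_gen_of_mem_artinRels {n : ℕ} {r : FreeGroup (Fin n)} (hr : r ∈ artinRels (BMat n)) :
    FreeGroup.lift (fun i : Fin n ↦ gen i) r = 1 := by
  obtain ⟨i, j, hij, -, rfl⟩ := hr
  rw [map_mul, map_inv, mul_inv_eq_one, lift_gen_altWord_BMat i j hij]

noncomputable def rootRep (n : ℕ) : ArtinGroup (BMat n) →* H :=
  PresentedGroup.toGroup fun _ ↦ lift_gen_of_mem_artinRels

lemma rootRep_σA (n : ℕ) (i : Fin n) : rootRep n (σA (BMat n) i) = gen i :=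
  PresentedGroup.toGroup.of _

def evenSubgroup : Subgroup H where
  carrier := {x | ∃ u : F, u.Even ∧ x = mkH u 1}
  one_mem' := ⟨0, fun _ ↦ rfl, rfl⟩
  mul_mem' := by
    rintro _ _ ⟨u, hu, rfl⟩ ⟨w, hw, rfl⟩
    exact ⟨u + w, hu.add hw, rfl⟩
  inv_mem' := by
    rintro _ ⟨u, hu, rfl⟩
    exact ⟨-u, fun v ↦ by simp only [Pi.neg_apply, hu v], rfl⟩

instance : evenSubgroup.Normal where
  conj_mem := by
    rintro _ ⟨u, hu, rfl⟩ g
    rw [eq_mkH g, mkH_mul, mkH_inv, mkH_mul, mul_one, mul_inv_cancel]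
    refine ⟨u ∘ g.right.symm, hu.comp_odd (map_neg g.right.symm), ?_⟩
    congr 1
    funext v
    simp only [Pi.add_apply, Function.comp_apply, Pi.neg_apply, LinearEquiv.apply_symm_apply,
      add_neg_cancel_comm]

lemma gen_mul_self_mem_evenSubgroup (a : ℕ) : gen a * gen a ∈ evenSubgroup := by
  refine ⟨Pi.single (root a) 1 + Pi.single (-root a) 1, fun v ↦ ?_, ?_⟩
  · simp only [Pi.add_apply, Pi.single_apply, neg_eq_iff_eq_neg, neg_neg]
    exact add_comm _ _
  · simp only [gen, mkH_mul, single_comp_symm, refl_root_self, refl_mul_self]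

noncomputable def coxRep (n : ℕ) : CoxGroup (BMat n) →* H ⧸ evenSubgroup :=
  PresentedGroup.toGroup (f := fun i : Fin n ↦ (gen i : H ⧸ evenSubgroup)) (by
    have hlift (r : FreeGroup (Fin n)) :
        FreeGroup.lift (fun i : Fin n ↦ (gen i : H ⧸ evenSubgroup)) r
          = (FreeGroup.lift (fun i : Fin n ↦ gen i) r : H ⧸ evenSubgroup) :=
      (FreeGroup.lift_unique ((QuotientGroup.mk' _).comp (FreeGroup.lift _)) fun _ ↦ by
        simp).symm
    rintro r (hr | ⟨i, rfl⟩)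
    · rw [hlift, lift_gen_of_mem_artinRels hr, QuotientGroup.mk_one]
    · rw [hlift, map_pow, FreeGroup.lift_apply_of, QuotientGroup.eq_one_iff, pow_two]
      exact gen_mul_self_mem_evenSubgroup i)

lemma coxRep_stdEpi (n : ℕ) (x : ArtinGroup (BMat n)) :
    coxRep n (stdEpi (BMat n) x) = (rootRep n x : H ⧸ evenSubgroup) := by
  have h : (coxRep n).comp (stdEpi (BMat n)) = (QuotientGroup.mk' _).comp (rootRep n) :=
    PresentedGroup.ext fun i ↦ by simp [coxRep, rootRep, stdEpi, PresentedGroup.toGroup.of]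
  exact DFunLike.congr_fun h x

lemma exists_even_rootRep_eq_of_stdEpi_eq {n : ℕ} {x y : ArtinGroup (BMat n)}
    (h : stdEpi (BMat n) x = stdEpi (BMat n) y) :
    ∃ u : F, u.Even ∧ rootRep n x = mkH u 1 * rootRep n y := by
  have hq : (rootRep n x : H ⧸ evenSubgroup) = rootRep n y := by
    rw [← coxRep_stdEpi, ← coxRep_stdEpi, h]
  obtain ⟨u, hu, hxy⟩ := QuotientGroup.eq_iff_div_mem.mp hq
  exact ⟨u, hu, by rw [← hxy, div_mul_cancel]⟩

def vec3 (a b c : ℤ) : V := fun k ↦ if k = 0 then a else if k = 1 then b else if k = 2 then c else 0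

lemma vec3_inj {a b c d e f : ℤ} : vec3 a b c = vec3 d e f ↔ a = d ∧ b = e ∧ c = f := by
  refine ⟨fun h ↦ ⟨congrFun h 0, congrFun h 1, congrFun h 2⟩, ?_⟩
  rintro ⟨rfl, rfl, rfl⟩
  rfl

lemma neg_vec3 (a b c : ℤ) : -vec3 a b c = vec3 (-a) (-b) (-c) := by
  funext k
  simp only [vec3, Pi.neg_apply]
  split_ifs <;> simp

lemma refl_zero_vec3 (a b c : ℤ) : refl 0 (vec3 a b c) = vec3 (-a) b c := by
  funext k
  simp only [refl_apply, reflFun_zero_apply, vec3]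
  split_ifs <;> simp_all

lemma refl_one_vec3 (a b c : ℤ) : refl 1 (vec3 a b c) = vec3 b a c := by
  funext k
  simp only [refl_apply, reflFun_succ_apply, vec3]
  split_ifs <;> simp_all

lemma refl_two_vec3 (a b c : ℤ) : refl 2 (vec3 a b c) = vec3 a c b := by
  funext k
  simp only [refl_apply, reflFun_succ_apply, vec3]
  split_ifs <;> simp_all

lemma root_zero_eq_vec3 : root 0 = vec3 1 0 0 := by
  funext k
  simp only [root_zero_apply, vec3]
  split_ifs <;> simp_all

lemma root_one_eq_vec3 : root 1 = vec3 (-1) 1 0 := by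
  funext k
  simp only [root_succ_apply, vec3]
  split_ifs <;> simp_all

lemma root_two_eq_vec3 : root 2 = vec3 0 (-1) 1 := by
  funext k
  simp only [root_succ_apply, vec3]
  split_ifs <;> simp_all

lemma mul_symm_apply (g h : V ≃ₗ[ℤ] V) (v : V) : (g * h).symm v = h.symm (g.symm v) := rfl

lemma gen_zero_mul_gen_one :
    gen 0 * gen 1 =
      mkH (Pi.single (vec3 1 0 0) 1 + Pi.single (vec3 1 1 0) 1) (refl 0 * refl 1) := by
  simp only [gen, mkH_mul, single_comp_symm, root_zero_eq_vec3, root_one_eq_vec3, refl_zero_vec3,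
    neg_neg]

lemma gen_one_mul_gen_zero_mul_gen_one_mul_gen_two :
    gen 1 * (gen 0 * (gen 1 * gen 2)) =
      mkH (Pi.single (vec3 (-1) 1 0) 1 + Pi.single (vec3 0 1 0) 1 + Pi.single (vec3 1 1 0) 1
        + Pi.single (vec3 0 1 1) 1) (refl 1 * (refl 0 * (refl 1 * refl 2))) := by
  simp only [gen, mkH_mul, Pi.add_comp, single_comp_symm, root_zero_eq_vec3, root_one_eq_vec3,
    root_two_eq_vec3, refl_zero_vec3, refl_one_vec3, neg_neg, add_assoc]

lemma braid_ne_of_even {u₁ u₂ : F} (h₁ : u₁.Even) (h₂ : u₂.Even) {x y : H}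
    (hx : x = mkH u₁ 1 * (gen 0 * gen 1))
    (hy : y = mkH u₂ 1 * (gen 1 * (gen 0 * (gen 1 * gen 2)))) :
    x * (y * x) ≠ y * (x * y) := by
  rw [gen_zero_mul_gen_one, mkH_one_mul] at hx
  rw [gen_one_mul_gen_zero_mul_gen_one_mul_gen_two, mkH_one_mul] at hy
  subst hx hy
  intro hxy
  simp only [mkH_mul] at hxy
  have hsum := congrArg (fun z : H ↦ toAdd z.left (vec3 0 (-1) (-1)) + toAdd z.left (vec3 (-1) 0 1)
    + toAdd z.left (vec3 (-1) 1 0) + toAdd z.left (vec3 (-1) 0 (-1))) hxy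
  simp only [mkH, toAdd_ofAdd, Pi.add_apply, Function.comp_apply, mul_symm_apply, refl_symm,
    refl_zero_vec3, refl_one_vec3, refl_two_vec3, Pi.single_apply, vec3_inj] at hsum
  norm_num at hsum
  have e₁ := h₁ (vec3 1 0 (-1))
  have e₂ := h₁ (vec3 0 (-1) 1)
  have e₃ := h₂ (vec3 0 (-1) (-1))
  simp only [neg_vec3, neg_neg, neg_zero] at e₁ e₂ e₃
  rw [e₁, e₂, e₃] at hsum
  -- each value of `u₁`, `u₂` now occurs twice; `1` occurs twice on one side, thrice on the other
  have h := sub_eq_zero.mpr hsum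
  ring_nf at h
  reduce_mod_char at h
  exact one_ne_zero h

end ArtinB

open ArtinB

lemma σA_braid_of_eq_three {n : ℕ} {M : Matrix (Fin n) (Fin n) ℕ} {i j : Fin n} (hij : i ≠ j)
    (h : M i j = 3) : σA M i * (σA M j * σA M i) = σA M j * (σA M i * σA M j) := by
  have hrel := PresentedGroup.one_of_mem (rels := artinRels M) ⟨i, j, hij, by omega, rfl⟩
  rw [h, map_mul, map_inv, mul_inv_eq_one] at hrel
  simpa [altWord, σA, PresentedGroup.of] using hrel

lemma sgB_of_lt {n k : ℕ} (h : k < n) : sgB n k = sC (BMat n) ⟨k, h⟩ := dif_pos h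

lemma braid_ne_of_stdEpi_eq {n : ℕ} (hn : 3 ≤ n) {x y : ArtinGroup (BMat n)}
    (hx : stdEpi (BMat n) x
      = stdEpi (BMat n) (σA (BMat n) ⟨0, by omega⟩ * σA (BMat n) ⟨1, by omega⟩))
    (hy : stdEpi (BMat n) y = stdEpi (BMat n) (σA (BMat n) ⟨1, by omega⟩ *
      (σA (BMat n) ⟨0, by omega⟩ * (σA (BMat n) ⟨1, by omega⟩ * σA (BMat n) ⟨2, by omega⟩)))) :
    x * (y * x) ≠ y * (x * y) := by
  obtain ⟨u₁, hu₁, hx⟩ := exists_even_rootRep_eq_of_stdEpi_eq hx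
  obtain ⟨u₂, hu₂, hy⟩ := exists_even_rootRep_eq_of_stdEpi_eq hy
  simp only [map_mul, rootRep_σA] at hx hy
  intro hxy
  exact braid_ne_of_even hu₁ hu₂ hx hy (by simpa only [map_mul] using congrArg (rootRep n) hxy)

/-- For type `Bₙ`, `n ≥ 3`, no endomorphism `Φ` of the Artin group satisfies
`μ ∘ Φ = ν_n^1`, nor (for `n` odd) `μ ∘ Φ = ν_n^2`. -/
theorem stmt_10 (n : ℕ) (hn : 3 ≤ n) :
    (¬ ∃ Φ : ArtinGroup (BMat n) →* ArtinGroup (BMat n),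
        ∀ i, stdEpi (BMat n) (Φ (σA (BMat n) i)) = nu1B n i) ∧
    (n % 2 = 1 →
      ¬ ∃ Φ : ArtinGroup (BMat n) →* ArtinGroup (BMat n),
          ∀ i, stdEpi (BMat n) (Φ (σA (BMat n) i)) = nu2B n i) := by
  have h₁ : cB n 0 * sgB n 1
      = stdEpi (BMat n) (σA (BMat n) ⟨0, by omega⟩ * σA (BMat n) ⟨1, by omega⟩) := by
    simp only [cB, sgB_of_lt (by omega : 0 < n), sgB_of_lt (by omega : 1 < n), map_mul,
      stdEpi_of]
  have h₂ : cB n 1 * sgB n 2 = stdEpi (BMat n) (σA (BMat n) ⟨1, by omega⟩ *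
      (σA (BMat n) ⟨0, by omega⟩ * (σA (BMat n) ⟨1, by omega⟩ * σA (BMat n) ⟨2, by omega⟩))) := by
    simp only [cB, sgB_of_lt (by omega : 0 < n), sgB_of_lt (by omega : 1 < n),
      sgB_of_lt (by omega : 2 < n), map_mul, stdEpi_of, mul_assoc]
  have hbraid := σA_braid_of_eq_three (M := BMat n) (i := ⟨1, by omega⟩) (j := ⟨2, by omega⟩)
    (by simp) (by simp [BMat])
  have no_lift (ν : Fin n → CoxGroup (BMat n)) (hν₁ : ν ⟨1, by omega⟩ = cB n 0 * sgB n 1)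
      (hν₂ : ν ⟨2, by omega⟩ = cB n 1 * sgB n 2) :
      ¬ ∃ Φ : ArtinGroup (BMat n) →* ArtinGroup (BMat n),
        ∀ i, stdEpi (BMat n) (Φ (σA (BMat n) i)) = ν i := by
    rintro ⟨Φ, hΦ⟩
    exact braid_ne_of_stdEpi_eq hn ((hΦ _).trans (hν₁.trans h₁)) ((hΦ _).trans (hν₂.trans h₂))
      (by simp only [← map_mul, hbraid])
  exact ⟨no_lift _ rfl rfl, fun _ ↦ no_lift _ rfl rfl⟩
end
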